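/- With the infinite prism Ω = {x ∈ ℝ^n : x_1 ≥ ⋯ ≥ x_n ≥ x_1 - √(1+w)} and B := Ω ∩ {x : 0 ≤ Σ x_i ≤ √(1-w(n-1))}, the isometry φ(x) = (x_n+a, x_1+b, …, x_{n-1}+b) maps the base Ω ∩ {Σx_i = 0} of B onto the top Ω ∩ {Σx_i = √(1-w(n-1))} of B, and the translates B^{φ^k}, k ∈ ℤ, have disjoint interiors with union Ω. -/

import Mathlib

/-!
The map `φ` rotates the coordinates cyclically, adds `b` to each of them and `√(1 + w)` once
more to the new first one. The prism `Ω` is cut out by `n` cyclically indexed gap inequalities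
`x i - x (i + 1) ≥ 0` for `i < n - 1` and `x (n - 1) - x 0 + √(1 + w) ≥ 0`, and `φ` permutes
these gaps cyclically, so `φ` preserves `Ω`. It also raises the coordinate sum `Σ` by
`t = n b + √(1 + w) = √(1 - w (n - 1)) > 0`. Hence `φ ^ k` maps `B` onto
`Ω ∩ {k t ≤ Σ ≤ (k + 1) t}`: these slabs cover `Ω`, and since `Σ` is an open map their
interiors lie in the pairwise disjoint open slabs `{k t < Σ < (k + 1) t}`.
-/

open Set Function

namespace IsometryEquiv

variable {α β : Type*} [PseudoEMetricSpace α] (e : α ≃ᵢ α)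

theorem zpow_apply_mem_iff {Ω : Set α} (hΩ : ∀ x, e x ∈ Ω ↔ x ∈ Ω) (k : ℤ) (x : α) :
    (e ^ k) x ∈ Ω ↔ x ∈ Ω := by
  induction k using Int.induction_on generalizing x with
  | zero => rfl
  | succ k ih => rw [zpow_add_one, mul_apply, ih, hΩ]
  | pred k ih => rw [zpow_sub_one, mul_apply, ih, ← hΩ, apply_inv_self]

theorem zpow_apply_eq_add_zsmul [AddCommGroup β] {σ : α → β} {t : β}
    (hσ : ∀ x, σ (e x) = σ x + t) (k : ℤ) (x : α) : σ ((e ^ k) x) = σ x + k • t := by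
  induction k using Int.induction_on generalizing x with
  | zero => simp
  | succ k ih => rw [zpow_add_one, mul_apply, ih, hσ, add_zsmul, one_zsmul]; abel
  | pred k ih =>
    have hinv : σ (e⁻¹ x) = σ x - t := by rw [eq_sub_iff_add_eq, ← hσ, apply_inv_self]
    rw [zpow_sub_one, mul_apply, ih, hinv, sub_zsmul, one_zsmul]; abel

variable [AddCommGroup β] {Ω : Set α} {σ : α → β} {t : β}

theorem zpow_image_inter_preimage (hΩ : ∀ x, e x ∈ Ω ↔ x ∈ Ω)
    (hσ : ∀ x, σ (e x) = σ x + t) (k : ℤ) (S : Set β) :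
    (e ^ k) '' (Ω ∩ σ ⁻¹' S) = Ω ∩ σ ⁻¹' ((· + k • t) '' S) := by
  ext y
  constructor
  · rintro ⟨x, ⟨hx, hxS⟩, rfl⟩
    exact ⟨(e.zpow_apply_mem_iff hΩ k x).2 hx, σ x, hxS,
      (e.zpow_apply_eq_add_zsmul hσ k x).symm⟩
  · rintro ⟨hy, c, hc, hcy⟩
    refine ⟨(e ^ (-k)) y, ⟨(e.zpow_apply_mem_iff hΩ _ y).2 hy, ?_⟩, ?_⟩
    · rw [mem_preimage, e.zpow_apply_eq_add_zsmul hσ, ← hcy, neg_zsmul, add_neg_cancel_right]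
      exact hc
    · rw [← mul_apply, ← zpow_add, add_neg_cancel, zpow_zero, coe_one, id]

theorem zpow_image_inter_preimage_Icc [PartialOrder β] [IsOrderedAddMonoid β]
    (hΩ : ∀ x, e x ∈ Ω ↔ x ∈ Ω) (hσ : ∀ x, σ (e x) = σ x + t) (k : ℤ) :
    (e ^ k) '' (Ω ∩ σ ⁻¹' Icc 0 t) = Ω ∩ σ ⁻¹' Icc (k • t) ((k + 1) • t) := by
  rw [e.zpow_image_inter_preimage hΩ hσ, image_add_const_Icc, zero_add, add_zsmul, one_zsmul,
    add_comm t]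

end IsometryEquiv

section Slabs

variable {α : Type*} {σ : α → ℝ}

theorem iUnion_inter_preimage_Icc_zsmul {Ω : Set α} {t : ℝ} (ht : 0 < t) :
    ⋃ k : ℤ, Ω ∩ σ ⁻¹' Icc (k • t) ((k + 1) • t) = Ω := by
  rw [← inter_iUnion, ← preimage_iUnion, iUnion_Icc_zsmul ht, preimage_univ, inter_univ]

theorem pairwise_disjoint_interior_inter_preimage_Icc_zsmul [TopologicalSpace α]
    (hσ : IsOpenMap σ) (hσc : Continuous σ) (Ω : Set α) (t : ℝ) :
    Pairwise (Disjoint on fun k : ℤ =>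
      interior (Ω ∩ σ ⁻¹' Icc (k • t) ((k + 1) • t))) := by
  have hsub : ∀ k : ℤ, interior (Ω ∩ σ ⁻¹' Icc (k • t) ((k + 1) • t)) ⊆
      σ ⁻¹' Ioo (k • t) ((k + 1) • t) := fun k => by
    rw [← interior_Icc, hσ.preimage_interior_eq_interior_preimage hσc]
    exact interior_mono inter_subset_right
  exact fun j k hjk => ((pairwise_disjoint_Ioo_zsmul t hjk).preimage σ).mono (hsub j) (hsub k)

end Slabs

theorem EuclideanSpace.isOpenMap_sum {ι : Type*} [Fintype ι] [Nonempty ι] :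
    IsOpenMap fun x : EuclideanSpace ℝ ι => ∑ i, x i := by
  classical
  have hσ : (fun x : EuclideanSpace ℝ ι => ∑ i, x i) = ⇑(∑ i, EuclideanSpace.proj i) := by
    ext x; simp
  rw [hσ]
  refine ContinuousLinearMap.isOpenMap_of_ne_zero _ fun h => ?_
  have := congr($h (EuclideanSpace.single (Classical.arbitrary ι) 1))
  simp at this

section Prism

variable {m : ℕ}

def prism (m : ℕ) (s : ℝ) : Set (EuclideanSpace ℝ (Fin (m + 1))) :=
  {x | Antitone x ∧ x 0 - s ≤ x (Fin.last m)}

/-- Indices are cyclic: `Fin.last m + 1 = 0`, so the last gap is `x (last m) - x 0 + s`. -/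
def cyclicGap (s : ℝ) (x : EuclideanSpace ℝ (Fin (m + 1))) (i : Fin (m + 1)) : ℝ :=
  x i - x (i + 1) + if i = Fin.last m then s else 0

theorem mem_prism_iff_forall_cyclicGap_nonneg {s : ℝ} {x : EuclideanSpace ℝ (Fin (m + 1))} :
    x ∈ prism m s ↔ ∀ i, 0 ≤ cyclicGap s x i := by
  rw [Fin.forall_fin_succ', prism, mem_ofPred_eq, Fin.antitone_iff_succ_le]
  simp only [cyclicGap, Fin.coeSucc_eq_succ, Fin.castSucc_ne_last, Fin.last_add_one, if_false,
    if_true, add_zero, sub_nonneg]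
  exact and_congr Iff.rfl (by constructor <;> intro h <;> linarith)

def IsShiftedRotation (b s : ℝ)
    (f : EuclideanSpace ℝ (Fin (m + 1)) → EuclideanSpace ℝ (Fin (m + 1))) : Prop :=
  ∀ x i, f x (i + 1) = x i + b + if i = Fin.last m then s else 0

namespace IsShiftedRotation

variable {b s : ℝ} {f : EuclideanSpace ℝ (Fin (m + 1)) → EuclideanSpace ℝ (Fin (m + 1))}

theorem of_forall_apply_eq {a : ℝ} (ha : a = b + s)
    (hf : ∀ x (i : Fin (m + 1)), f x i =
      if (i : ℕ) = 0 then x (Fin.last m) + a else x ⟨i - 1, by omega⟩ + b) :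
    IsShiftedRotation b s f := by
  intro x i
  induction i using Fin.lastCases with
  | last => simp [hf, ha, add_assoc]
  | cast j =>
    simp [hf, Fin.coeSucc_eq_succ, Fin.castSucc_ne_last]
    rfl

theorem cyclicGap_apply_add_one (hf : IsShiftedRotation b s f)
    (x : EuclideanSpace ℝ (Fin (m + 1))) (i : Fin (m + 1)) :
    cyclicGap s (f x) (i + 1) = cyclicGap s x i := by
  simp only [cyclicGap, hf x]
  split_ifs <;> ring

theorem apply_mem_prism_iff (hf : IsShiftedRotation b s f) (x : EuclideanSpace ℝ (Fin (m + 1))) :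
    f x ∈ prism m s ↔ x ∈ prism m s := by
  simp only [mem_prism_iff_forall_cyclicGap_nonneg]
  rw [← (Equiv.addRight (1 : Fin (m + 1))).forall_congr_right]
  simp only [Equiv.coe_addRight, hf.cyclicGap_apply_add_one]

theorem sum_apply (hf : IsShiftedRotation b s f) (x : EuclideanSpace ℝ (Fin (m + 1))) :
    ∑ i, f x i = ∑ i, x i + ((m + 1) * b + s) := by
  rw [← Equiv.sum_comp (Equiv.addRight 1)]
  simp only [Equiv.coe_addRight, hf x, Finset.sum_add_distrib, Finset.sum_const, Finset.card_univ,
    Fintype.card_fin, Finset.sum_ite_eq', Finset.mem_univ, if_true, nsmul_eq_mul]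
  push_cast
  ring

end IsShiftedRotation

end Prism

theorem schobi_prism_tiles_Omega
    (n : ℕ) (hn : 2 ≤ n) (w : ℝ) (hw2 : w < 1 / ((n : ℝ) - 1))
    (b a : ℝ)
    (hb : b = (Real.sqrt (1 - w * ((n : ℝ) - 1)) - Real.sqrt (1 + w)) / n)
    (ha : a = b + Real.sqrt (1 + w))
    (e : EuclideanSpace ℝ (Fin n) ≃ᵢ EuclideanSpace ℝ (Fin n))
    (he : ∀ (x : EuclideanSpace ℝ (Fin n)) (i : Fin n),
      e x i =
        if h : (i : ℕ) = 0 then x ⟨n - 1, by omega⟩ + a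
        else x ⟨(i : ℕ) - 1, by omega⟩ + b)
    (Ω : Set (EuclideanSpace ℝ (Fin n)))
    (hΩ : Ω = {x : EuclideanSpace ℝ (Fin n) |
      (∀ i j : Fin n, i ≤ j → x j ≤ x i) ∧
      x ⟨0, by omega⟩ - Real.sqrt (1 + w) ≤ x ⟨n - 1, by omega⟩})
    (Bslab : Set (EuclideanSpace ℝ (Fin n)))
    (hB : Bslab = Ω ∩ {x : EuclideanSpace ℝ (Fin n) |
      0 ≤ ∑ i, x i ∧ (∑ i, x i) ≤ Real.sqrt (1 - w * ((n : ℝ) - 1))}) :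
    (e '' (Ω ∩ {x : EuclideanSpace ℝ (Fin n) | (∑ i, x i) = 0}) =
      Ω ∩ {x : EuclideanSpace ℝ (Fin n) | (∑ i, x i) = Real.sqrt (1 - w * ((n : ℝ) - 1))}) ∧
    (∀ j k : ℤ, j ≠ k →
      Disjoint (interior ((e ^ j) '' Bslab)) (interior ((e ^ k) '' Bslab))) ∧
    (⋃ k : ℤ, (e ^ k) '' Bslab) = Ω := by
  obtain ⟨m, rfl⟩ : ∃ m, n = m + 1 := ⟨n - 1, by omega⟩
  set s := √(1 + w)
  set t := √(1 - w * (((m + 1 : ℕ) : ℝ) - 1))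
  have ht : 0 < t := by
    have hm : (0 : ℝ) < ((m + 1 : ℕ) : ℝ) - 1 := by
      rw [Nat.cast_add_one, add_sub_cancel_right]; exact_mod_cast (by omega : 0 < m)
    exact Real.sqrt_pos.2 (by linarith [(lt_div_iff₀ hm).1 hw2])
  have hrot : IsShiftedRotation b s e := .of_forall_apply_eq ha he
  have hheight : ∀ x, ∑ i, e x i = ∑ i, x i + t := fun x => by
    rw [hrot.sum_apply, hb]
    push_cast
    field_simp
    ring
  have hprism : Ω = prism m s := hΩ
  have hslab : Bslab = prism m s ∩ (fun x => ∑ i, x i) ⁻¹' Icc 0 t := by rw [hB, hprism]; rfl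
  subst hprism hslab
  have himage := e.zpow_image_inter_preimage_Icc (σ := fun x => ∑ i, x i)
    hrot.apply_mem_prism_iff hheight
  refine ⟨?_, fun j k hjk => ?_, ?_⟩
  · have hbase := e.zpow_image_inter_preimage (σ := fun x => ∑ i, x i)
      hrot.apply_mem_prism_iff hheight 1 {0}
    rwa [zpow_one, image_singleton, zero_add, one_zsmul] at hbase
  · rw [himage, himage]
    exact pairwise_disjoint_interior_inter_preimage_Icc_zsmul EuclideanSpace.isOpenMap_sum
      (by fun_prop) _ t hjk
  · simp only [himage]
    exact iUnion_inter_preimage_Icc_zsmul ht
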